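/- For any bijection f : {0,1}^n → {1,...,2^n} and n ≥ 2, Σ_{j=1}^{2^n − 1} θ(n, f^{-1}({1,...,j})) ≥ Σ_{j=1}^{2^n − 1} θ(n, ξ_n^{-1}({1,...,j})) = 2^{2n−1} − 2^{n−1}; that is, the Gray code labeling minimizes the total edge boundary over all initial segments. -/

import Mathlib

open Finset

/-- Number of coordinates in which two 0-1 vectors differ. -/
def diffCount {n : ℕ} (u v : Fin n → Bool) : ℕ :=
  (Finset.univ.filter fun i => u i ≠ v i).card

/-- Adjacency in the hypercube `Q_n`: differ in exactly one coordinate. -/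
def cubeAdj {n : ℕ} (u v : Fin n → Bool) : Prop := diffCount u v = 1

instance {n : ℕ} (u v : Fin n → Bool) : Decidable (cubeAdj u v) :=
  inferInstanceAs (Decidable (diffCount u v = 1))

/-- `theta n S`: number of edges of `Q_n` with exactly one endpoint in `S`. -/
def theta (n : ℕ) (S : Finset (Fin n → Bool)) : ℕ :=
  ((Finset.univ ×ˢ Finset.univ).filter fun p : (Fin n → Bool) × (Fin n → Bool) =>
    p.1 ∈ S ∧ p.2 ∉ S ∧ cubeAdj p.1 p.2).card

/-- The reflected Gray code map `ξ_n : {0,1}^n → {1,...,2^n}`. -/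
def gray : (n : ℕ) → (Fin n → Bool) → ℕ
  | 0, _ => 1
  | n + 1, v =>
    if v 0 = false then gray n (fun i => v i.succ)
    else 2 ^ (n + 1) + 1 - gray n (fun i => v i.succ)

/-- Wirelength of an embedding `f` of `Q_n` into a host with distance `d`. -/
def wirelength {n : ℕ} {α : Type*} (d : α → α → ℕ) (f : (Fin n → Bool) → α) : ℕ :=
  (∑ u : Fin n → Bool, ∑ v : Fin n → Bool, if cubeAdj u v then d (f u) (f v) else 0) / 2

/-- Cyclic distance on the cycle with `m` vertices labeled `1,...,m`. -/
def cycDist (m a b : ℕ) : ℕ := min (Nat.dist a b) (m - Nat.dist a b)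

/-- The 2-order Gray code map. -/
def gray2 (n₁ n₂ : ℕ) (v : Fin (n₁ + n₂) → Bool) : ℕ × ℕ :=
  (gray n₁ fun i => v (Fin.castAdd n₂ i), gray n₂ fun i => v (Fin.natAdd n₁ i))

/-!
Write `S_j` for the set of vertices with label at most `j` and `h k = ∑_{i<k} s₂(i)` for the
cumulative binary digit sum (`cumDigitSum`). Counting the `n` neighbours of each vertex of `S_j`
gives `θ(S_j) + 2 e(S_j) = n j`, where `e(S)` is the number of edges inside `S` (`adjPairsIn`
counts them twice). The edge-isoperimetric inequality of the cube, `e(S) ≤ h |S|`, follows by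
splitting `S` along the first coordinate and the superadditivity
`h a + h b + min a b ≤ h (a + b)`. Since `4 ∑_{j<2^n} h j = (n - 1) 2^n (2^n - 1)`, summing over
`j` gives `∑_j θ(S_j) ≥ 2^{n-1} (2^n - 1)` for every bijective labelling.

For any labelling, `∑_j θ(S_j)` is the sum over edges `uv` of `|f u - f v|`, and the reflection
in the definition of the Gray code gives the recursion `W (n + 1) = 2 W n + 4^n` for this sum, so
the Gray code attains `2^{n-1} (2^n - 1)`.
-/

def cumDigitSum (k : ℕ) : ℕ := ∑ i ∈ range k, (Nat.digits 2 i).sum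

theorem digitSum_two_mul (m : ℕ) : (Nat.digits 2 (2 * m)).sum = (Nat.digits 2 m).sum := by
  rcases eq_or_ne m 0 with rfl | hm
  · rfl
  · simpa using congrArg List.sum (Nat.digits_add 2 one_lt_two 0 m two_pos (Or.inr hm))

theorem digitSum_two_mul_add_one (m : ℕ) :
    (Nat.digits 2 (2 * m + 1)).sum = (Nat.digits 2 m).sum + 1 := by
  simpa [add_comm] using congrArg List.sum (Nat.digits_add 2 one_lt_two 1 m one_lt_two (by simp))

theorem cumDigitSum_succ (k : ℕ) : cumDigitSum (k + 1) = cumDigitSum k + (Nat.digits 2 k).sum :=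
  sum_range_succ _ _

theorem cumDigitSum_two_mul (m : ℕ) : cumDigitSum (2 * m) = 2 * cumDigitSum m + m := by
  induction m with
  | zero => rfl
  | succ m ih =>
    rw [mul_add_one, cumDigitSum_succ, ← add_assoc, cumDigitSum_succ, ih, digitSum_two_mul,
      digitSum_two_mul_add_one, cumDigitSum_succ]
    ring

theorem cumDigitSum_two_mul_add_one (m : ℕ) :
    cumDigitSum (2 * m + 1) = cumDigitSum m + cumDigitSum (m + 1) + m := by
  rw [cumDigitSum_succ, cumDigitSum_two_mul, digitSum_two_mul, cumDigitSum_succ]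
  ring

theorem cumDigitSum_add_min_le (a b : ℕ) :
    cumDigitSum a + cumDigitSum b + min a b ≤ cumDigitSum (a + b) := by
  induction h : a + b using Nat.strong_induction_on generalizing a b with
  | _ s ih =>
    subst h
    rcases Nat.eq_zero_or_pos a with rfl | ha
    · simp [cumDigitSum]
    rcases Nat.eq_zero_or_pos b with rfl | hb
    · simp [cumDigitSum]
    obtain ⟨x, rfl | rfl⟩ := Nat.even_or_odd' a <;>
      obtain ⟨y, rfl | rfl⟩ := Nat.even_or_odd' b
    · have := ih (x + y) (by omega) x y rfl
      rw [← mul_add, cumDigitSum_two_mul, cumDigitSum_two_mul, cumDigitSum_two_mul]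
      omega
    · have h₁ := ih (x + y) (by omega) x y rfl
      have h₂ := ih (x + y + 1) (by omega) x (y + 1) (by ring)
      rw [show 2 * x + (2 * y + 1) = 2 * (x + y) + 1 by ring, cumDigitSum_two_mul_add_one,
        cumDigitSum_two_mul, cumDigitSum_two_mul_add_one]
      omega
    · have h₁ := ih (x + y) (by omega) x y rfl
      have h₂ := ih (x + y + 1) (by omega) (x + 1) y (by ring)
      rw [show 2 * x + 1 + 2 * y = 2 * (x + y) + 1 by ring, cumDigitSum_two_mul_add_one,
        cumDigitSum_two_mul, cumDigitSum_two_mul_add_one]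
      omega
    · have h₁ := ih (x + y + 1) (by omega) x (y + 1) (by ring)
      have h₂ := ih (x + y + 1) (by omega) (x + 1) y (by ring)
      rw [show 2 * x + 1 + (2 * y + 1) = 2 * (x + y + 1) by ring, cumDigitSum_two_mul,
        cumDigitSum_two_mul_add_one, cumDigitSum_two_mul_add_one]
      omega

theorem sum_Icc_one_pred_eq_sum_range {M : Type*} [AddCommMonoid M] {F : ℕ → M} (h0 : F 0 = 0)
    (N : ℕ) : ∑ j ∈ Icc 1 (N - 1), F j = ∑ j ∈ range N, F j := by
  rcases N with _ | N
  · simp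
  · rw [range_eq_Ico, sum_eq_sum_Ico_succ_bot N.succ_pos, h0, zero_add, zero_add,
      Nat.add_sub_cancel, Nat.succ_eq_add_one, Ico_add_one_right_eq_Icc]

theorem two_mul_cumDigitSum_two_pow (n : ℕ) : 2 * cumDigitSum (2 ^ n) = n * 2 ^ n := by
  induction n with
  | zero => rfl
  | succ n ih => rw [pow_succ', cumDigitSum_two_mul]; linear_combination 2 * ih

theorem sum_range_two_mul_cumDigitSum (k : ℕ) :
    ∑ j ∈ range (2 * k), cumDigitSum j =
      4 * ∑ j ∈ range k, cumDigitSum j + cumDigitSum k + 2 * ∑ j ∈ range k, j := by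
  induction k with
  | zero => rfl
  | succ k ih =>
    rw [mul_add_one, sum_range_succ, sum_range_succ, ih, cumDigitSum_two_mul_add_one,
      cumDigitSum_two_mul, sum_range_succ, sum_range_succ]
    ring

theorem sum_range_two_pow_cumDigitSum (n : ℕ) :
    4 * ∑ j ∈ range (2 ^ n), cumDigitSum j + 2 ^ n * (2 ^ n - 1) =
      n * (2 ^ n * (2 ^ n - 1)) := by
  induction n with
  | zero => simp [cumDigitSum]
  | succ n ih =>
    have hgauss := sum_range_id_mul_two (2 ^ n)
    have hpow := two_mul_cumDigitSum_two_pow n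
    have hpos : 1 ≤ 2 ^ n := Nat.one_le_two_pow
    rw [pow_succ', sum_range_two_mul_cumDigitSum]
    zify [hpos, show 1 ≤ 2 * 2 ^ n by omega] at ih hgauss hpow ⊢
    linear_combination 4 * ih + 4 * hgauss + 2 * hpow

section Cube

variable {n : ℕ}

theorem diffCount_eq_hammingDist (u v : Fin n → Bool) : diffCount u v = hammingDist u v := rfl

theorem cubeAdj_comm (u v : Fin n → Bool) : cubeAdj u v ↔ cubeAdj v u := by
  simp only [cubeAdj, diffCount_eq_hammingDist, hammingDist_comm]

theorem not_cubeAdj_zero (u v : Fin 0 → Bool) : ¬ cubeAdj u v := by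
  simp [cubeAdj, diffCount]

theorem diffCount_cons (b c : Bool) (u v : Fin n → Bool) :
    diffCount (Fin.cons b u : Fin (n + 1) → Bool) (Fin.cons c v) =
      (if b = c then 0 else 1) + diffCount u v := by
  simp only [diffCount, card_filter, Fin.sum_univ_succ, Fin.cons_zero, Fin.cons_succ, ne_eq,
    ite_not]

theorem cubeAdj_cons (b c : Bool) (u v : Fin n → Bool) :
    cubeAdj (Fin.cons b u : Fin (n + 1) → Bool) (Fin.cons c v) ↔
      if b = c then cubeAdj u v else u = v := by
  rw [cubeAdj, cubeAdj, diffCount_cons, diffCount_eq_hammingDist, ← hammingDist_eq_zero]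
  split_ifs <;> omega

theorem sum_cube_succ {M : Type*} [AddCommMonoid M] (F : (Fin (n + 1) → Bool) → M) :
    ∑ v, F v = ∑ w, F (Fin.cons false w) + ∑ w, F (Fin.cons true w) := by
  rw [← (Fin.consEquiv fun _ => Bool).sum_comp, Fintype.sum_prod_type, Fintype.sum_bool, add_comm]
  rfl

theorem card_cubeAdj : ∀ {n : ℕ} (u : Fin n → Bool), #{v | cubeAdj u v} = n
  | 0, u => by simp [not_cubeAdj_zero]
  | n + 1, u => by
    obtain ⟨b, x, rfl⟩ : ∃ b x, u = Fin.cons b x :=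
      ⟨u 0, Fin.tail u, (Fin.cons_self_tail u).symm⟩
    rw [card_filter, sum_cube_succ]
    cases b <;> simp [cubeAdj_cons, card_cubeAdj x, add_comm]

def adjPairsIn (S : Finset (Fin n → Bool)) : ℕ :=
  ∑ u, ∑ v, if u ∈ S ∧ v ∈ S ∧ cubeAdj u v then 1 else 0

theorem theta_eq_sum (S : Finset (Fin n → Bool)) :
    theta n S = ∑ u, ∑ v, if u ∈ S ∧ v ∉ S ∧ cubeAdj u v then 1 else 0 := by
  rw [theta, card_filter, sum_product]

theorem theta_add_adjPairsIn (S : Finset (Fin n → Bool)) : theta n S + adjPairsIn S = n * #S := by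
  have hsplit (u v : Fin n → Bool) :
      ((if u ∈ S ∧ v ∉ S ∧ cubeAdj u v then 1 else 0) +
        if u ∈ S ∧ v ∈ S ∧ cubeAdj u v then 1 else 0) =
      if u ∈ S then (if cubeAdj u v then 1 else 0) else 0 := by
    by_cases u ∈ S <;> by_cases v ∈ S <;> simp [*]
  simp only [theta_eq_sum, adjPairsIn, ← sum_add_distrib, hsplit]
  simp [card_cubeAdj, mul_comm]

def cubeSlice (S : Finset (Fin (n + 1) → Bool)) (b : Bool) : Finset (Fin n → Bool) :=
  {w | Fin.cons b w ∈ S}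

theorem card_eq_card_cubeSlice_add (S : Finset (Fin (n + 1) → Bool)) :
    #S = #(cubeSlice S false) + #(cubeSlice S true) := by
  simp only [cubeSlice, card_filter]
  rw [← sum_cube_succ (fun v => if v ∈ S then 1 else 0)]
  simp

theorem adjPairsIn_eq_cubeSlice_add (S : Finset (Fin (n + 1) → Bool)) :
    adjPairsIn S = adjPairsIn (cubeSlice S false) + adjPairsIn (cubeSlice S true) +
      2 * #(cubeSlice S false ∩ cubeSlice S true) := by
  have hcross (b c : Bool) :
      (∑ x : Fin n → Bool, ∑ y,
          if Fin.cons b x ∈ S ∧ Fin.cons c y ∈ S ∧ x = y then 1 else 0) =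
        #{w | Fin.cons b w ∈ S ∧ Fin.cons c w ∈ S} := by
    rw [card_filter]
    congr! with x
    rw [Fintype.sum_eq_single x (by simp +contextual [eq_comm])]
    simp
  simp only [adjPairsIn, sum_cube_succ, cubeAdj_cons, cubeSlice, mem_filter, mem_univ, true_and,
    Bool.false_eq_true, Bool.true_eq_false, if_true, if_false, sum_add_distrib]
  rw [hcross, hcross, ← filter_and]
  simp only [and_comm (a := Fin.cons true _ ∈ S)]
  ring

theorem adjPairsIn_le_two_mul_cumDigitSum :
    ∀ {n : ℕ} (S : Finset (Fin n → Bool)), adjPairsIn S ≤ 2 * cumDigitSum #S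
  | 0, S => by simp [adjPairsIn, not_cubeAdj_zero]
  | n + 1, S => by
    have h₀ := adjPairsIn_le_two_mul_cumDigitSum (cubeSlice S false)
    have h₁ := adjPairsIn_le_two_mul_cumDigitSum (cubeSlice S true)
    have hinter : #(cubeSlice S false ∩ cubeSlice S true) ≤
        min #(cubeSlice S false) #(cubeSlice S true) :=
      le_min (card_le_card inter_subset_left) (card_le_card inter_subset_right)
    have := cumDigitSum_add_min_le #(cubeSlice S false) #(cubeSlice S true)
    rw [adjPairsIn_eq_cubeSlice_add, card_eq_card_cubeSlice_add]
    omega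

end Cube

theorem card_filter_mem_Icc_of_bijOn {α : Type*} [Fintype α] {f : α → ℕ} {N : ℕ}
    (hf : Set.BijOn f Set.univ (Set.Icc 1 N)) {j : ℕ} (hj : j ≤ N) :
    #{v | f v ∈ Icc 1 j} = j := by
  refine (card_nbij f (fun v hv => (mem_filter.mp hv).2) (hf.injOn.mono (Set.subset_univ _))
    (fun y hy => ?_)).trans (Nat.card_Icc 1 j)
  have hy' : y ∈ Set.Icc 1 j := by simpa using hy
  obtain ⟨v, -, rfl⟩ := hf.surjOn ⟨hy'.1, hy'.2.trans hj⟩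
  exact ⟨v, by simpa using hy', rfl⟩

theorem two_pow_mul_le_two_mul_sum_theta {n : ℕ} {f : (Fin n → Bool) → ℕ}
    (hf : Set.BijOn f Set.univ (Set.Icc 1 (2 ^ n))) :
    2 ^ n * (2 ^ n - 1) ≤ 2 * ∑ j ∈ Icc 1 (2 ^ n - 1), theta n {v | f v ∈ Icc 1 j} := by
  have hlevel : ∀ j ∈ Icc 1 (2 ^ n - 1),
      n * j ≤ theta n {v | f v ∈ Icc 1 j} + 2 * cumDigitSum j := by
    intro j hj
    have hcard := card_filter_mem_Icc_of_bijOn hf (j := j) (by simp at hj; omega)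
    have := theta_add_adjPairsIn {v | f v ∈ Icc 1 j}
    have := adjPairsIn_le_two_mul_cumDigitSum {v | f v ∈ Icc 1 j}
    rw [hcard] at *
    omega
  have hsum := sum_le_sum hlevel
  rw [sum_add_distrib, ← mul_sum, ← mul_sum,
    sum_Icc_one_pred_eq_sum_range (F := fun j => j) rfl,
    sum_Icc_one_pred_eq_sum_range (F := cumDigitSum) rfl] at hsum
  have hT := sum_range_two_pow_cumDigitSum n
  have hgauss : n * (2 ^ n * (2 ^ n - 1)) = 2 * (n * ∑ j ∈ range (2 ^ n), j) := by
    rw [← sum_range_id_mul_two]; ring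
  omega

theorem sum_theta_levels_eq_sum_sub {n : ℕ} {g : (Fin n → Bool) → ℕ}
    (hg : ∀ v, g v ∈ Icc 1 (2 ^ n)) :
    ∑ j ∈ Icc 1 (2 ^ n - 1), theta n {v | g v ∈ Icc 1 j} =
      ∑ u, ∑ v, if cubeAdj u v then g v - g u else 0 := by
  have hcount (u v : Fin n → Bool) :
      #{j ∈ Icc 1 (2 ^ n - 1) | g u ∈ Icc 1 j ∧ g v ∉ Icc 1 j} = g v - g u := by
    have hu := mem_Icc.mp (hg u)
    have hv := mem_Icc.mp (hg v)
    rw [← Nat.card_Ico (g u) (g v)]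
    congr 1
    ext j
    simp only [mem_filter, mem_Icc, mem_Ico]
    omega
  simp only [theta_eq_sum, mem_filter, mem_univ, true_and]
  rw [sum_comm]
  refine sum_congr rfl fun u _ => ?_
  rw [sum_comm]
  refine sum_congr rfl fun v _ => ?_
  split_ifs with hadj
  · simp only [hadj, and_true, ← hcount u v, card_filter]
  · simp [hadj]

/-- Twice `wirelength Nat.dist g`: every edge is counted in both directions. -/
def adjDistSum {n : ℕ} (g : (Fin n → Bool) → ℕ) : ℕ :=
  ∑ u, ∑ v, if cubeAdj u v then Nat.dist (g u) (g v) else 0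

theorem two_mul_sum_theta_levels {n : ℕ} {g : (Fin n → Bool) → ℕ}
    (hg : ∀ v, g v ∈ Icc 1 (2 ^ n)) :
    2 * ∑ j ∈ Icc 1 (2 ^ n - 1), theta n {v | g v ∈ Icc 1 j} = adjDistSum g := by
  have hswap : (∑ u, ∑ v, if cubeAdj u v then g v - g u else 0) =
      ∑ u, ∑ v, if cubeAdj u v then g u - g v else 0 := by
    rw [sum_comm]
    simp only [cubeAdj_comm]
  rw [sum_theta_levels_eq_sum_sub hg, two_mul]
  nth_rw 2 [hswap]
  simp only [adjDistSum, ← sum_add_distrib]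
  refine sum_congr rfl fun u _ => sum_congr rfl fun v _ => ?_
  split_ifs
  · unfold Nat.dist; omega
  · rfl

theorem gray_cons_false {n : ℕ} (w : Fin n → Bool) :
    gray (n + 1) (Fin.cons false w) = gray n w := by
  simp [gray]

theorem gray_cons_true {n : ℕ} (w : Fin n → Bool) :
    gray (n + 1) (Fin.cons true w) = 2 ^ (n + 1) + 1 - gray n w := by
  simp [gray]

theorem gray_mem_Icc : ∀ {n : ℕ} (v : Fin n → Bool), gray n v ∈ Icc 1 (2 ^ n)
  | 0, _ => by simp [gray]
  | n + 1, v => by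
    have := mem_Icc.mp (gray_mem_Icc (n := n) (fun i => v i.succ))
    rw [mem_Icc, pow_succ]
    unfold gray
    split_ifs <;> omega

theorem two_mul_gray_le {n : ℕ} (w : Fin n → Bool) : 2 * gray n w ≤ 2 ^ (n + 1) := by
  have := (mem_Icc.mp (gray_mem_Icc w)).2
  rw [pow_succ]
  omega

theorem two_mul_sum_gray (n : ℕ) : 2 * ∑ v, gray n v = 2 ^ n * (2 ^ n + 1) := by
  cases n with
  | zero => rfl
  | succ n =>
    have hsum (w : Fin n → Bool) : gray n w + (2 ^ (n + 1) + 1 - gray n w) = 2 ^ (n + 1) + 1 := by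
      have := two_mul_gray_le w
      omega
    simp only [sum_cube_succ, gray_cons_false, gray_cons_true, ← sum_add_distrib, hsum, sum_const,
      card_univ, Fintype.card_pi, Fintype.card_bool, prod_const, Fintype.card_fin, smul_eq_mul]
    ring

theorem Nat.dist_tsub_tsub {a b c : ℕ} (ha : a ≤ c) (hb : b ≤ c) :
    Nat.dist (c - a) (c - b) = Nat.dist a b := by
  unfold Nat.dist; omega

theorem adjDistSum_gray_succ (n : ℕ) :
    adjDistSum (gray (n + 1)) =
      2 * adjDistSum (gray n) + 2 * ∑ w, (2 ^ (n + 1) + 1 - 2 * gray n w) := by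
  have hreflect (w : Fin n → Bool) :
      Nat.dist (2 ^ (n + 1) + 1 - gray n w) (gray n w) = 2 ^ (n + 1) + 1 - 2 * gray n w := by
    have := two_mul_gray_le w
    unfold Nat.dist; omega
  have hsymm (x y : Fin n → Bool) :
      Nat.dist (2 ^ (n + 1) + 1 - gray n x) (2 ^ (n + 1) + 1 - gray n y) =
        Nat.dist (gray n x) (gray n y) :=
    Nat.dist_tsub_tsub (by linarith [two_mul_gray_le x]) (by linarith [two_mul_gray_le y])
  simp only [adjDistSum, sum_cube_succ, cubeAdj_cons, gray_cons_false, gray_cons_true,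
    Bool.false_eq_true, Bool.true_eq_false, if_true, if_false, sum_add_distrib,
    Fintype.sum_ite_eq, hreflect, Nat.dist_comm (gray n _) (2 ^ (n + 1) + 1 - _), hsymm]
  ring

theorem sum_reflect_sub_two_mul_gray (n : ℕ) :
    ∑ w, (2 ^ (n + 1) + 1 - 2 * gray n w) = 2 ^ n * 2 ^ n := by
  have hle (w : Fin n → Bool) : 2 * gray n w ≤ 2 ^ (n + 1) + 1 :=
    (two_mul_gray_le w).trans (Nat.le_succ _)
  have hsplit : ∑ w, (2 ^ (n + 1) + 1 - 2 * gray n w) + 2 * ∑ w, gray n w =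
      2 ^ n * (2 ^ (n + 1) + 1) := by
    simp [mul_sum, ← sum_add_distrib, Nat.sub_add_cancel (hle _)]
  have := two_mul_sum_gray n
  rw [pow_succ] at hsplit ⊢
  linarith

theorem adjDistSum_gray (n : ℕ) : adjDistSum (gray n) = 2 ^ n * (2 ^ n - 1) := by
  induction n with
  | zero => simp [adjDistSum, not_cubeAdj_zero]
  | succ n ih =>
    have hpos : 1 ≤ 2 ^ n := Nat.one_le_two_pow
    rw [adjDistSum_gray_succ, sum_reflect_sub_two_mul_gray, ih, pow_succ]
    zify [hpos, show 1 ≤ 2 ^ n * 2 by omega]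
    ring

theorem two_mul_two_pow_sub (n : ℕ) :
    2 * (2 ^ (2 * n - 1) - 2 ^ (n - 1)) = 2 ^ n * (2 ^ n - 1) := by
  rcases n with _ | n
  · rfl
  · have hpos : 1 ≤ 2 ^ n := Nat.one_le_two_pow
    rw [show 2 * (n + 1) - 1 = n + n + 1 by omega, Nat.add_sub_cancel, pow_succ, pow_succ,
      pow_add]
    zify [hpos, show 2 ^ n ≤ 2 ^ n * 2 ^ n * 2 by nlinarith, show 1 ≤ 2 ^ n * 2 by omega]
    ring

theorem stmt6_general (n : ℕ) (f : (Fin n → Bool) → ℕ)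
    (hf : Set.BijOn f Set.univ (Set.Icc 1 (2 ^ n))) :
    (∑ j ∈ Finset.Icc 1 (2 ^ n - 1),
        theta n (Finset.univ.filter fun v => f v ∈ Finset.Icc 1 j) ≥
      ∑ j ∈ Finset.Icc 1 (2 ^ n - 1),
        theta n (Finset.univ.filter fun v => gray n v ∈ Finset.Icc 1 j)) ∧
    (∑ j ∈ Finset.Icc 1 (2 ^ n - 1),
        theta n (Finset.univ.filter fun v => gray n v ∈ Finset.Icc 1 j) =
      2 ^ (2 * n - 1) - 2 ^ (n - 1)) := by
  have hgray := (two_mul_sum_theta_levels gray_mem_Icc).trans (adjDistSum_gray n)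
  have hlower := two_pow_mul_le_two_mul_sum_theta hf
  have := two_mul_two_pow_sub n
  constructor <;> omega

/-- The Gray code labeling minimizes the total edge boundary over initial segments. -/
theorem stmt6 (n : ℕ) (hn : 2 ≤ n) (f : (Fin n → Bool) → ℕ)
    (hf : Set.BijOn f Set.univ (Set.Icc 1 (2 ^ n))) :
    (∑ j ∈ Finset.Icc 1 (2 ^ n - 1),
        theta n (Finset.univ.filter fun v => f v ∈ Finset.Icc 1 j) ≥
      ∑ j ∈ Finset.Icc 1 (2 ^ n - 1),
        theta n (Finset.univ.filter fun v => gray n v ∈ Finset.Icc 1 j)) ∧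
    (∑ j ∈ Finset.Icc 1 (2 ^ n - 1),
        theta n (Finset.univ.filter fun v => gray n v ∈ Finset.Icc 1 j) =
      2 ^ (2 * n - 1) - 2 ^ (n - 1)) :=
  stmt6_general n f hf
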